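/- Let d, n ≥ 2. If there exists a rational map φ of degree d admitting the dihedral group ⟨T(z)=ωz, A(z)=1/z⟩ (ω = exp(2πi/n)) as a group of automorphisms, then d ≡ 1 (mod n) or d ≡ −1 (mod n). In particular, the case d ≡ 0 (mod n), d ≢ ±1 (mod n), cannot occur. -/

import Mathlib

open Polynomial

private lemma coeff_comp_C_mul_X (f : ℂ[X]) (a : ℂ) (k : ℕ) :
    (f.comp (C a * X)).coeff k = a ^ k * f.coeff k := by
  induction f using Polynomial.induction_on' with
  | add p q hp hq => simp [add_comp, coeff_add, hp, hq, mul_add]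
  | monomial m b =>
      have hpow : (C a * X) ^ m = C (a ^ m) * X ^ m := by rw [mul_pow, C_pow]
      rw [monomial_comp, hpow]
      rcases eq_or_ne k m with rfl | hkm
      · simp only [coeff_C_mul, coeff_X_pow, coeff_monomial, eq_self_iff_true, if_true]
        ring
      · simp only [coeff_C_mul, coeff_X_pow, coeff_monomial, if_neg hkm, if_neg (Ne.symm hkm),
          mul_zero]

private lemma reflect_reflect' (f : ℂ[X]) (N : ℕ) : reflect N (reflect N f) = f := by
  ext i
  simp [coeff_reflect, revAt_invol]

private lemma natDegree_reflect_le' (f : ℂ[X]) (N : ℕ) (h : f.natDegree ≤ N) :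
    (reflect N f).natDegree ≤ N := by
  rw [natDegree_le_iff_coeff_eq_zero]
  intro i hi
  rw [coeff_reflect, revAt_eq_self_of_lt hi]
  exact coeff_eq_zero_of_natDegree_lt (lt_of_le_of_lt h hi)

private lemma natDegree_reflect_eq' (f : ℂ[X]) (hf : f ≠ 0) (N : ℕ) (h : f.natDegree ≤ N) :
    (reflect N f).natDegree = N - f.natTrailingDegree := by
  have hv := f.natTrailingDegree_le_natDegree
  apply le_antisymm
  · rw [natDegree_le_iff_coeff_eq_zero]
    intro i hi
    rw [coeff_reflect]
    rcases le_or_gt i N with hiN | hiN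
    · rw [revAt_le hiN]
      exact coeff_eq_zero_of_lt_natTrailingDegree (by omega)
    · rw [revAt_eq_self_of_lt hiN]
      exact coeff_eq_zero_of_natDegree_lt (by omega)
  · apply le_natDegree_of_ne_zero
    rw [coeff_reflect, revAt_le (by omega)]
    have h2 : N - (N - f.natTrailingDegree) = f.natTrailingDegree := by omega
    rw [h2]
    exact mt trailingCoeff_eq_zero.mp hf

private lemma aeval_invX (f : ℂ[X]) (N : ℕ) (h : f.natDegree ≤ N) :
    (aeval ((RatFunc.X : RatFunc ℂ)⁻¹) f) * RatFunc.X ^ N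
      = algebraMap ℂ[X] (RatFunc ℂ) (reflect N f) := by
  have hX : (RatFunc.X : RatFunc ℂ) ≠ 0 := RatFunc.X_ne_zero
  letI : Invertible (RatFunc.X : RatFunc ℂ) := invertibleOfNonzero hX
  have h2 : (reflect N f).natDegree ≤ N := natDegree_reflect_le' f N h
  have key := Polynomial.eval₂_reflect_mul_pow (algebraMap ℂ (RatFunc ℂ)) RatFunc.X N
    (reflect N f) h2
  rw [reflect_reflect', invOf_eq_inv] at key
  rw [aeval_def, key, ← aeval_def, ← RatFunc.algebraMap_X,
    Polynomial.aeval_algebraMap_apply, Polynomial.aeval_X_left_apply]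

private lemma extract_lemma (P Q : ℂ[X]) (d : ℕ) (hP : P.natDegree ≤ d) (hQ : Q.natDegree ≤ d)
    (h0 : Q.coeff 0 ≠ 0) (hl : Q.coeff Q.natDegree ≠ 0)
    (E : reflect d P * P = reflect d Q * Q) :
    ∃ j, Q.natDegree ≤ j ∧ P.coeff (j - Q.natDegree) ≠ 0 ∧ P.coeff j ≠ 0 := by
  set q := Q.natDegree with hq
  have hR : (reflect d Q * Q).coeff (d + q) = Q.coeff 0 * Q.coeff q := by
    rw [coeff_mul]
    rw [Finset.sum_eq_single_of_mem (d, q) (by simp)]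
    · dsimp only
      rw [coeff_reflect, revAt_le (le_refl d), Nat.sub_self]
    · rintro ⟨i, j⟩ hmem hne
      simp only [Finset.HasAntidiagonal.mem_antidiagonal] at hmem
      dsimp only
      rcases lt_trichotomy j q with hj | hj | hj
      · have hi : d < i := by omega
        rw [coeff_reflect, revAt_eq_self_of_lt hi,
          coeff_eq_zero_of_natDegree_lt (lt_of_le_of_lt hQ hi), zero_mul]
      · exact absurd (by simp only [Prod.mk.injEq]; omega) hne
      · rw [show Q.coeff j = 0 from coeff_eq_zero_of_natDegree_lt (by omega), mul_zero]
  have hL : (reflect d P * P).coeff (d + q) ≠ 0 := by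
    rw [E, hR]; exact mul_ne_zero h0 hl
  rw [coeff_mul] at hL
  obtain ⟨⟨i, j⟩, hmem, hne⟩ := Finset.exists_ne_zero_of_sum_ne_zero hL
  simp only [Finset.HasAntidiagonal.mem_antidiagonal] at hmem
  dsimp only at hne
  have h1 : (reflect d P).coeff i ≠ 0 := left_ne_zero_of_mul hne
  have h2 : P.coeff j ≠ 0 := right_ne_zero_of_mul hne
  have hid : i ≤ d := by
    by_contra hgt
    push_neg at hgt
    rw [coeff_reflect, revAt_eq_self_of_lt hgt] at h1
    exact h1 (coeff_eq_zero_of_natDegree_lt (lt_of_le_of_lt hP hgt))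
  refine ⟨j, by omega, ?_, h2⟩
  rw [coeff_reflect, revAt_le hid] at h1
  have hdi : d - i = j - q := by omega
  rwa [hdi] at h1

/-- If a rational map `φ` of degree `d ≥ 2` admits both `T(z) = ωz`
(`ω = exp(2πi/n)`, `n ≥ 2`) and `A(z) = 1/z` as automorphisms (hence the dihedral group
they generate), then `d ≡ 1 (mod n)` or `d ≡ −1 (mod n)`. -/
theorem dihedral_admissible_only_if (d n : ℕ) (hd : 2 ≤ d) (hn : 2 ≤ n)
    (ω : ℂ) (hω : ω = Complex.exp (2 * Real.pi * Complex.I / n))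
    (φ : RatFunc ℂ)
    (hdeg : max φ.num.natDegree φ.denom.natDegree = d)
    (hT : aeval (RatFunc.C ω * RatFunc.X) φ.num / aeval (RatFunc.C ω * RatFunc.X) φ.denom =
      RatFunc.C ω * φ)
    (hA : aeval ((RatFunc.X : RatFunc ℂ)⁻¹) φ.num / aeval ((RatFunc.X : RatFunc ℂ)⁻¹) φ.denom
      = φ⁻¹) :
    (n : ℤ) ∣ (d : ℤ) - 1 ∨ (n : ℤ) ∣ (d : ℤ) + 1 := by
  have hn0 : n ≠ 0 := by omega
  have hprim : IsPrimitiveRoot ω n := hω ▸ Complex.isPrimitiveRoot_exp n hn0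
  have hω0 : ω ≠ 0 := hω ▸ Complex.exp_ne_zero _
  have hφ0 : φ ≠ 0 := by
    rintro rfl
    rw [RatFunc.num_zero, RatFunc.denom_zero, natDegree_zero, natDegree_one] at hdeg
    omega
  set P := φ.num with hPdef
  set Q := φ.denom with hQdef
  have hQ0 : Q ≠ 0 := φ.denom_ne_zero
  have hP0 : P ≠ 0 := RatFunc.num_ne_zero hφ0
  set p := P.natDegree with hp
  set q := Q.natDegree with hqd'
  have hpd : p ≤ d := hdeg ▸ le_max_left _ _
  have hqd : q ≤ d := hdeg ▸ le_max_right _ _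
  have cop : IsCoprime P Q := φ.isCoprime_num_denom
  have hmon : Q.Monic := φ.monic_denom
  have hlP : P.coeff p ≠ 0 := mt leadingCoeff_eq_zero.mp hP0
  have hlQ : Q.coeff q ≠ 0 := mt leadingCoeff_eq_zero.mp hQ0
  -- rewrite the aeval at ω X as algebraMap of a composition
  have hcomp : ∀ f : ℂ[X], aeval (RatFunc.C ω * RatFunc.X) f
      = algebraMap ℂ[X] (RatFunc ℂ) (f.comp (Polynomial.C ω * Polynomial.X)) := by
    intro f
    rw [comp_eq_aeval, ← Polynomial.aeval_algebraMap_apply, map_mul, RatFunc.algebraMap_C,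
      RatFunc.algebraMap_X]
  set Pc := P.comp (Polynomial.C ω * Polynomial.X) with hPcdef
  set Qc := Q.comp (Polynomial.C ω * Polynomial.X) with hQcdef
  have hcoeffP : ∀ k, Pc.coeff k = ω ^ k * P.coeff k := coeff_comp_C_mul_X P ω
  have hcoeffQ : ∀ k, Qc.coeff k = ω ^ k * Q.coeff k := coeff_comp_C_mul_X Q ω
  have hPcne : Pc ≠ 0 := by
    intro h
    have h2 := hcoeffP p
    rw [h, coeff_zero] at h2
    rcases mul_eq_zero.mp h2.symm with h3 | h3
    · exact pow_ne_zero p hω0 h3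
    · exact hlP h3
  have hQcne : Qc ≠ 0 := by
    intro h
    have h2 := hcoeffQ q
    rw [h, coeff_zero] at h2
    rcases mul_eq_zero.mp h2.symm with h3 | h3
    · exact pow_ne_zero q hω0 h3
    · exact hlQ h3
  -- polynomial form of the rotation relation
  have hT' : Pc * Q = Polynomial.C ω * P * Qc := by
    rw [hcomp, hcomp, ← φ.num_div_denom] at hT
    rw [← hPdef, ← hQdef] at hT
    rw [mul_div_assoc'] at hT
    rw [div_eq_div_iff (RatFunc.algebraMap_ne_zero hQcne)
      (RatFunc.algebraMap_ne_zero hQ0)] at hT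
    apply RatFunc.algebraMap_injective ℂ
    rw [map_mul, map_mul, map_mul, RatFunc.algebraMap_C]
    exact hT
  -- polynomial form of the inversion relation
  have hRP0 : reflect d P ≠ 0 := by rwa [Ne, reflect_eq_zero_iff]
  have hRQ0 : reflect d Q ≠ 0 := by rwa [Ne, reflect_eq_zero_iff]
  have hA' : reflect d P * P = reflect d Q * Q := by
    have hX : (RatFunc.X : RatFunc ℂ) ^ d ≠ 0 := pow_ne_zero _ RatFunc.X_ne_zero
    have e1 : aeval ((RatFunc.X : RatFunc ℂ)⁻¹) P
        = algebraMap ℂ[X] (RatFunc ℂ) (reflect d P) * (RatFunc.X ^ d)⁻¹ := by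
      rw [eq_mul_inv_iff_mul_eq₀ hX]; exact aeval_invX P d hpd
    have e2 : aeval ((RatFunc.X : RatFunc ℂ)⁻¹) Q
        = algebraMap ℂ[X] (RatFunc ℂ) (reflect d Q) * (RatFunc.X ^ d)⁻¹ := by
      rw [eq_mul_inv_iff_mul_eq₀ hX]; exact aeval_invX Q d hqd
    rw [e1, e2, mul_div_mul_right _ _ (inv_ne_zero hX)] at hA
    rw [← φ.num_div_denom, ← hPdef, ← hQdef, inv_div] at hA
    rw [div_eq_div_iff (RatFunc.algebraMap_ne_zero hRQ0)
      (RatFunc.algebraMap_ne_zero hP0)] at hA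
    have h9 : algebraMap ℂ[X] (RatFunc ℂ) (reflect d P * P)
        = algebraMap ℂ[X] (RatFunc ℂ) (Q * reflect d Q) := by
      rw [map_mul, map_mul]; exact hA
    have h10 := RatFunc.algebraMap_injective ℂ h9
    rw [h10, mul_comm]
  -- P is supported on a single residue class
  have hPdvd : P ∣ Pc := cop.dvd_of_dvd_mul_right ⟨Polynomial.C ω * Qc, by
    rw [hT']; ring⟩
  obtain ⟨u, hu⟩ := hPdvd
  have hune : u ≠ 0 := by rintro rfl; rw [mul_zero] at hu; exact hPcne hu
  have hdegu : u.natDegree = 0 := by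
    have h1 : Pc.natDegree = p := by
      rw [hPcdef, natDegree_comp, natDegree_C_mul_X ω hω0, mul_one]
    have h2 := natDegree_mul hP0 hune
    rw [← hu, h1] at h2
    omega
  have hPc2 : Pc = P * Polynomial.C (u.coeff 0) := by
    rw [hu]; congr 1; exact eq_C_of_natDegree_eq_zero hdegu
  have hckP : ∀ k, ω ^ k * P.coeff k = P.coeff k * u.coeff 0 := fun k => by
    rw [← hcoeffP k, hPc2, coeff_mul_C]
  have hcP : u.coeff 0 = ω ^ p := by
    have := hckP p
    rw [mul_comm (ω ^ p)] at this
    exact (mul_left_cancel₀ hlP this).symm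
  have hPsupp : ∀ k, P.coeff k ≠ 0 → ω ^ k = ω ^ p := fun k hk => by
    have h7 : ω ^ k * P.coeff k = ω ^ p * P.coeff k := by
      rw [hckP k, hcP]; ring
    exact mul_right_cancel₀ hk h7
  -- Q is supported on a single residue class
  have hQdvd : Q ∣ Qc := by
    have h1 : Q ∣ (Qc * Polynomial.C ω) * P := ⟨Pc, by linear_combination -hT'⟩
    have h2 : Q ∣ Qc * Polynomial.C ω := cop.symm.dvd_of_dvd_mul_right h1
    have h3 : Qc * Polynomial.C ω ∣ Qc := ⟨Polynomial.C ω⁻¹, by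
      rw [mul_assoc, ← C_mul, mul_inv_cancel₀ hω0, C_1, mul_one]⟩
    exact h2.trans h3
  obtain ⟨v, hv⟩ := hQdvd
  have hvne : v ≠ 0 := by rintro rfl; rw [mul_zero] at hv; exact hQcne hv
  have hdegv : v.natDegree = 0 := by
    have h1 : Qc.natDegree = q := by
      rw [hQcdef, natDegree_comp, natDegree_C_mul_X ω hω0, mul_one]
    have h2 := natDegree_mul hQ0 hvne
    rw [← hv, h1] at h2
    omega
  have hQc2 : Qc = Q * Polynomial.C (v.coeff 0) := by
    rw [hv]; congr 1; exact eq_C_of_natDegree_eq_zero hdegv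
  have hckQ : ∀ k, ω ^ k * Q.coeff k = Q.coeff k * v.coeff 0 := fun k => by
    rw [← hcoeffQ k, hQc2, coeff_mul_C]
  have hcQ : v.coeff 0 = ω ^ q := by
    have := hckQ q
    rw [mul_comm (ω ^ q)] at this
    exact (mul_left_cancel₀ hlQ this).symm
  have hQsupp : ∀ k, Q.coeff k ≠ 0 → ω ^ k = ω ^ q := fun k hk => by
    have h7 : ω ^ k * Q.coeff k = ω ^ q * Q.coeff k := by
      rw [hckQ k, hcQ]; ring
    exact mul_right_cancel₀ hk h7
  -- the relation ω^p = ω·ω^q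
  have hpq : ω ^ p = ω * ω ^ q := by
    have h1 : P * Q * Polynomial.C (ω ^ p) = P * Q * Polynomial.C (ω * ω ^ q) := by
      have h2 := hT'
      rw [hPc2, hQc2, hcP, hcQ] at h2
      rw [C_mul]
      linear_combination h2
    have h3 := mul_left_cancel₀ (mul_ne_zero hP0 hQ0) h1
    exact C_injective h3
  -- degree relation from the inversion identity
  have hdeg2 : (d - P.natTrailingDegree) + p = (d - Q.natTrailingDegree) + q := by
    have h1 := congrArg natDegree hA'
    rw [natDegree_mul hRP0 hP0, natDegree_mul hRQ0 hQ0,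
      natDegree_reflect_eq' P hP0 d hpd, natDegree_reflect_eq' Q hQ0 d hqd] at h1
    exact h1
  have hvP : P.natTrailingDegree ≤ p := P.natTrailingDegree_le_natDegree
  have hvQ : Q.natTrailingDegree ≤ q := Q.natTrailingDegree_le_natDegree
  have hmax : max p q = d := hdeg
  by_cases h0Q : Q.coeff 0 ≠ 0
  · -- denominator has nonzero constant term: d = p and n ∣ d - 1
    left
    have hvQ0 : Q.natTrailingDegree = 0 :=
      Nat.le_zero.mp (natTrailingDegree_le_of_ne_zero h0Q)
    have hqp : q ≤ p := by omega
    have hdp : d = p := by rw [← hmax, max_eq_left hqp]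
    obtain ⟨j, hjq, hj1, hj2⟩ := extract_lemma P Q d hpd hqd h0Q hlQ hA'
    have e1 : ω ^ (j - q) = ω ^ p := hPsupp _ hj1
    have e2 : ω ^ j = ω ^ p := hPsupp _ hj2
    have eq1 : ω ^ q = 1 := by
      have h4 : ω ^ (j - q) * ω ^ q = ω ^ j := by
        rw [← pow_add]; congr 1; omega
      rw [e1, e2] at h4
      have h5 : ω ^ p * ω ^ q = ω ^ p * 1 := by rw [mul_one]; exact h4
      exact mul_left_cancel₀ (pow_ne_zero p hω0) h5
    have hωp : ω ^ p = ω := by rw [hpq, eq1, mul_one]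
    have hp1 : ω ^ (p - 1) = 1 := by
      have h6 : ω ^ (p - 1) * ω = 1 * ω := by
        rw [← pow_succ, one_mul]
        have : p - 1 + 1 = p := by omega
        rw [this, hωp]
      exact mul_right_cancel₀ hω0 h6
    have hdvd : n ∣ p - 1 := (hprim.pow_eq_one_iff_dvd _).mp hp1
    have : (n : ℤ) ∣ ((p - 1 : ℕ) : ℤ) := Int.natCast_dvd_natCast.mpr hdvd
    rw [Nat.cast_sub (by omega : 1 ≤ p)] at this
    rw [hdp]
    exact_mod_cast this
  · -- numerator has nonzero constant term: d = q and n ∣ d + 1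
    right
    push_neg at h0Q
    have h0P : P.coeff 0 ≠ 0 := by
      intro h0P
      have hXP : (X : ℂ[X]) ∣ P := X_dvd_iff.mpr h0P
      have hXQ : (X : ℂ[X]) ∣ Q := X_dvd_iff.mpr h0Q
      exact Polynomial.not_isUnit_X (cop.isUnit_of_dvd' hXP hXQ)
    have hvP0 : P.natTrailingDegree = 0 :=
      Nat.le_zero.mp (natTrailingDegree_le_of_ne_zero h0P)
    have hpq' : p ≤ q := by omega
    have hdq : d = q := by rw [← hmax, max_eq_right hpq']
    obtain ⟨j, hjp, hj1, hj2⟩ := extract_lemma Q P d hqd hpd h0P hlP hA'.symm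
    have e1 : ω ^ (j - p) = ω ^ q := hQsupp _ hj1
    have e2 : ω ^ j = ω ^ q := hQsupp _ hj2
    have eq1 : ω ^ p = 1 := by
      have h4 : ω ^ (j - p) * ω ^ p = ω ^ j := by
        rw [← pow_add]; congr 1; omega
      rw [e1, e2] at h4
      have h5 : ω ^ q * ω ^ p = ω ^ q * 1 := by rw [mul_one]; exact h4
      exact mul_left_cancel₀ (pow_ne_zero q hω0) h5
    have hq1 : ω ^ (q + 1) = 1 := by
      rw [pow_succ, mul_comm, ← hpq, eq1]
    have hdvd : n ∣ q + 1 := (hprim.pow_eq_one_iff_dvd _).mp hq1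
    have : (n : ℤ) ∣ ((q + 1 : ℕ) : ℤ) := Int.natCast_dvd_natCast.mpr hdvd
    rw [hdq]
    exact_mod_cast this
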